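/- For all positive integers p and ω, there is a function f_{(ω,p)} : ℕ → ℝ satisfying the following. Let Γ be an abelian group with at most p elements of order at most 2, let A ⊆ Γ be a non-empty set with |Γ \ A| ≤ ω, and let (G, γ) be a Γ-labelled graph. If t ≥ f_{(ω,p)}(k), then every (A, 1)-subdivision of K_t contained in G contains an (A, k)-cycle. -/

import Mathlib

namespace ArbPaper

universe u v

/-- The `γ`-value of a walk: the sum of the labels of its edges. -/
def walkVal {V : Type u} {Γ : Type v} [AddCommGroup Γ] {G : SimpleGraph V}
    (γ : Sym2 V → Γ) {x y : V} (w : G.Walk x y) : Γ :=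
  (w.edges.map γ).sum

/-- The set `S` induces a subgraph having no cycle of `γ`-value in `A`. -/
def NoCycleValIn {V : Type u} {Γ : Type v} [AddCommGroup Γ] (G : SimpleGraph V)
    (γ : Sym2 V → Γ) (A : Set Γ) (S : Set V) : Prop :=
  ∀ (v : V) (w : G.Walk v v), w.IsCycle → (∀ x ∈ w.support, x ∈ S) →
    walkVal γ w ∉ A

/-- The `(Γ, A)`-vertex-arboricity of the subgraph of `G` induced on `S`:
the minimum number of parts in a partition of `S` such that each part induces
a subgraph having no cycle of `γ`-value in `A`. -/
noncomputable def arbOn {V : Type u} {Γ : Type v} [AddCommGroup Γ] (G : SimpleGraph V)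
    (γ : Sym2 V → Γ) (A : Set Γ) (S : Set V) : ℕ :=
  sInf {k : ℕ | ∃ f : V → Fin k,
    ∀ i : Fin k, NoCycleValIn G γ A {v | v ∈ S ∧ f v = i}}

/-- The `(Γ, A)`-vertex-arboricity of `(G, γ)`. -/
noncomputable def arb {V : Type u} {Γ : Type v} [AddCommGroup Γ] (G : SimpleGraph V)
    (γ : Sym2 V → Γ) (A : Set Γ) : ℕ :=
  arbOn G γ A Set.univ

/-- `G` contains an `(A, d)`-cycle: a cycle of `γ`-value in `A` and length at least `d`. -/
def ContainsADCycle {V : Type u} {Γ : Type v} [AddCommGroup Γ] (G : SimpleGraph V)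
    (γ : Sym2 V → Γ) (A : Set Γ) (d : ℕ) : Prop :=
  ∃ (v : V) (w : G.Walk v v), w.IsCycle ∧ walkVal γ w ∈ A ∧ d ≤ w.length

/-- `b` (the branching vertices) together with the branching paths `P i j` (for `i < j`)
form a subdivision of the complete graph `K t` inside `G`. -/
def IsKtSubdivision {V : Type u} (G : SimpleGraph V) (t : ℕ) (b : Fin t → V)
    (P : ∀ i j : Fin t, G.Walk (b i) (b j)) : Prop :=
  Function.Injective b ∧
  (∀ i j : Fin t, i < j → (P i j).IsPath) ∧
  (∀ i j : Fin t, i < j → ∀ v ∈ (P i j).support, v ∈ Set.range b → v = b i ∨ v = b j) ∧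
  (∀ i j k l : Fin t, i < j → k < l → (i, j) ≠ (k, l) → ∀ v,
    v ∈ (P i j).support → v ∈ (P k l).support →
      (v = b i ∨ v = b j) ∧ (v = b k ∨ v = b l))

/-- `G` itself is (as a whole) a subdivision of `K t` with data `b`, `P`:
every vertex and every edge of `G` lies on some branching path. -/
def IsSpanningKtSubdivision {V : Type u} (G : SimpleGraph V) (t : ℕ) (b : Fin t → V)
    (P : ∀ i j : Fin t, G.Walk (b i) (b j)) : Prop :=
  IsKtSubdivision G t b P ∧
  (∀ v : V, ∃ i j : Fin t, i < j ∧ v ∈ (P i j).support) ∧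
  (∀ e ∈ G.edgeSet, ∃ i j : Fin t, i < j ∧ e ∈ (P i j).edges)

/-- `G` contains an `(A, d)`-subdivision of `K t`: a subdivision of `K t` in which every
branching path has `γ`-value in `A` and length at least `d`. -/
def ContainsADSubdivision {V : Type u} {Γ : Type v} [AddCommGroup Γ] (G : SimpleGraph V)
    (γ : Sym2 V → Γ) (A : Set Γ) (t d : ℕ) : Prop :=
  ∃ (b : Fin t → V) (P : ∀ i j : Fin t, G.Walk (b i) (b j)),
    IsKtSubdivision G t b P ∧
    ∀ i j : Fin t, i < j → walkVal γ (P i j) ∈ A ∧ d ≤ (P i j).length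

/-- `w` is an `X`-path lying inside the induced subgraph `G[Y]`: a path of length at
least `2` whose endpoints lie in `X`, internal vertices lie outside `X`, and all of
whose vertices lie in `Y`. -/
def IsXPathIn {V : Type u} (G : SimpleGraph V) (X Y : Set V) {x y : V}
    (w : G.Walk x y) : Prop :=
  w.IsPath ∧ 2 ≤ w.length ∧ x ∈ X ∧ y ∈ X ∧
  (∀ v ∈ w.support, v ∈ Y) ∧
  (∀ v ∈ w.support, v ≠ x → v ≠ y → v ∉ X)

/-- `(L 0, L 1, …, L p)` is a leveling of the connected graph `G`. -/
def IsLeveling {V : Type u} (G : SimpleGraph V) (p : ℕ) (L : ℕ → Set V) : Prop :=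
  (∀ i j, i ≤ p → j ≤ p → i ≠ j → Disjoint (L i) (L j)) ∧
  (∃ v : V, L 0 = {v}) ∧
  (∀ v : V, ∃ i, i ≤ p ∧ v ∈ L i) ∧
  (∀ i, 1 ≤ i → i ≤ p → ∀ v ∈ L i,
    (∃ u ∈ L (i - 1), G.Adj v u) ∧ (∀ j, j + 2 ≤ i → ∀ u ∈ L j, ¬ G.Adj v u))

/-- `G[Y]` is a connected component of `G[S]`. -/
def IsCompOf {V : Type u} (G : SimpleGraph V) (Y S : Set V) : Prop :=
  Y ⊆ S ∧ (G.induce Y).Connected ∧ ∀ u ∈ Y, ∀ v ∈ S, G.Adj u v → v ∈ Y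



section ListVal
variable {Γ : Type*} [AddCommGroup Γ] {ι : Type*}

def pathVal (lam : ι → ι → Γ) : List ι → Γ
  | [] => 0
  | [_] => 0
  | a :: b :: l => lam a b + pathVal lam (b :: l)

def cycVal (lam : ι → ι → Γ) (l : List ι) : Γ := pathVal lam (l ++ l.take 1)

lemma pathVal_append_singleton (lam : ι → ι → Γ) :
    ∀ (l : List ι) (hl : l ≠ []) (a : ι),
      pathVal lam (l ++ [a]) = pathVal lam l + lam (l.getLast hl) a
  | [], hl, a => absurd rfl hl
  | [x], _, a => by simp [pathVal]
  | x :: y :: l, _, a => by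
      have := pathVal_append_singleton lam (y :: l) (by simp) a
      simp only [List.cons_append, List.append_eq, pathVal] at this ⊢
      rw [this, List.getLast_cons (a := x) (by simp : y :: l ≠ [])]
      abel

lemma pathVal_of_chain (lam : ι → ι → Γ) (μ : Γ) :
    ∀ (l : List ι), List.Chain' (fun a b => lam a b = μ) l →
      pathVal lam l = (l.length - 1) • μ
  | [], _ => by simp [pathVal]
  | [x], _ => by simp [pathVal]
  | x :: y :: l, h => by
      rw [List.Chain', List.isChain_cons_cons] at h
      have ih := pathVal_of_chain lam μ (y :: l) h.2
      simp only [pathVal, ih, h.1, List.length_cons]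
      simp only [Nat.add_sub_cancel]
      rw [succ_nsmul']

lemma cycVal_append_one (lam : ι → ι → Γ) (xs : List ι) (hxs : xs ≠ []) (u : ι) :
    cycVal lam (xs ++ [u]) =
      pathVal lam xs + lam (xs.getLast hxs) u + lam u (xs.head hxs) := by
  obtain ⟨x, xs', rfl⟩ : ∃ x xs', xs = x :: xs' := by
    cases xs with
    | nil => exact absurd rfl hxs
    | cons x xs' => exact ⟨x, xs', rfl⟩
  have h1 : ((x :: xs') ++ [u]).take 1 = [x] := rfl
  rw [cycVal, h1]
  rw [pathVal_append_singleton lam ((x :: xs') ++ [u]) (by simp) x,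
    pathVal_append_singleton lam (x :: xs') (by simp) u,
    List.getLast_append_singleton]
  rfl

lemma cycVal_append_two (lam : ι → ι → Γ) (xs : List ι) (hxs : xs ≠ []) (u w : ι) :
    cycVal lam (xs ++ [u, w]) =
      pathVal lam xs + lam (xs.getLast hxs) u + lam u w + lam w (xs.head hxs) := by
  obtain ⟨x, xs', rfl⟩ : ∃ x xs', xs = x :: xs' := by
    cases xs with
    | nil => exact absurd rfl hxs
    | cons x xs' => exact ⟨x, xs', rfl⟩
  have h0 : (x :: xs') ++ [u, w] = ((x :: xs') ++ [u]) ++ [w] := by simp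
  have h1 : ((x :: xs') ++ [u, w]).take 1 = [x] := rfl
  rw [cycVal, h1, h0]
  rw [pathVal_append_singleton lam (((x :: xs') ++ [u]) ++ [w]) (by simp) x,
    pathVal_append_singleton lam ((x :: xs') ++ [u]) (by simp) w,
    pathVal_append_singleton lam (x :: xs') (by simp) u,
    List.getLast_append_singleton, List.getLast_append_singleton]
  rfl

lemma nsmul_mod {Γ : Type*} [AddCommGroup Γ] (μ : Γ) (r s : ℕ) (h : r • μ = 0) :
    s • μ = (s % r) • μ := by
  conv_lhs => rw [← Nat.div_add_mod s r]
  rw [add_nsmul, mul_nsmul, h, smul_zero, zero_add]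

lemma take_one_eq_head {α : Type*} (l : List α) (h : l ≠ []) : l.take 1 = [l.head h] := by
  cases l with
  | nil => exact absurd rfl h
  | cons z l2 => rfl

lemma getLast_ne_head {α : Type*} (l : List α) (h : l ≠ []) (hnd : l.Nodup)
    (h2 : 2 ≤ l.length) : l.getLast h ≠ l.head h := by
  cases l with
  | nil => exact absurd rfl h
  | cons z l2 =>
    cases l2 with
    | nil => simp at h2
    | cons y l3 =>
      rw [List.getLast_cons (a := z) (by simp : y :: l3 ≠ [])]
      intro heq
      have hz : (y :: l3).getLast (by simp) = z := heq
      exact (List.nodup_cons.mp hnd).1 (hz ▸ List.getLast_mem (by simp : y :: l3 ≠ []))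

end ListVal

section Pigeon

lemma pigeon {ι Γ : Type*} {S : Finset ι} {f : ι → Γ} {D : Set Γ} {n m : ℕ}
    (hD : D.encard ≤ (m : ℕ∞)) (hf : ∀ i ∈ S, f i ∈ D) (hS : m * n < S.card) :
    ∃ c ∈ D, ∃ T ⊆ S, n < T.card ∧ ∀ i ∈ T, f i = c := by
  classical
  have himg : (S.image f).card ≤ m := by
    have h1 : ((S.image f : Finset Γ) : Set Γ) ⊆ D := by
      intro x hx
      simp only [Finset.coe_image, Set.mem_image, Finset.mem_coe] at hx
      obtain ⟨i, hi, rfl⟩ := hx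
      exact hf i hi
    have h2 := (Set.encard_mono h1).trans hD
    rwa [Set.encard_coe_eq_coe_finsetCard, Nat.cast_le] at h2
  have hlt : (S.image f).card * n < S.card :=
    lt_of_le_of_lt (Nat.mul_le_mul_right n himg) hS
  obtain ⟨y, hy, hcard⟩ := Finset.exists_lt_card_fiber_of_mul_lt_card_of_maps_to
    (fun a ha => Finset.mem_image_of_mem f ha) hlt
  obtain ⟨i, hi, rfl⟩ := Finset.mem_image.mp hy
  exact ⟨f i, hf i hi, S.filter (fun x => f x = f i), Finset.filter_subset _ _, hcard,
    fun j hj => (Finset.mem_filter.mp hj).2⟩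

def Gfun (m : ℕ) : ℕ → ℕ
  | 0 => 1
  | n + 1 => m * Gfun m n + 2

lemma greedy {Γ : Type*} {ι : Type*} [LinearOrder ι] (lam : ι → ι → Γ) (D : Set Γ)
    (m : ℕ) (hD : D.encard ≤ (m : ℕ∞)) :
    ∀ (n : ℕ) (S : Finset ι), (∀ u ∈ S, ∀ w ∈ S, u ≠ w → lam u w ∈ D) →
      Gfun m n ≤ S.card →
      ∃ T ⊆ S, ∃ c : ι → Γ, n ≤ T.card ∧ (∀ u ∈ T, c u ∈ D) ∧
        (∀ u ∈ T, ∀ w ∈ T, u < w → lam u w = c u) := by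
  classical
  intro n
  induction n with
  | zero =>
    intro S _ _
    exact ⟨∅, Finset.empty_subset _, fun i => lam i i, by simp, by simp, by simp⟩
  | succ n ih =>
    intro S hS hcard
    simp only [Gfun] at hcard
    have hne : S.Nonempty := Finset.card_pos.mp (by omega)
    set u := S.min' hne with hu
    have huS : u ∈ S := S.min'_mem hne
    have herase : m * Gfun m n < (S.erase u).card := by
      rw [Finset.card_erase_of_mem huS]; omega
    obtain ⟨cu, hcuD, T', hT'sub, hT'card, hT'⟩ := pigeon hD
      (fun i hi => hS u huS i (Finset.mem_of_mem_erase hi)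
        (fun h => Finset.ne_of_mem_erase hi h.symm)) herase
    obtain ⟨T, hTsub, c, hTcard, hcD, hpairs⟩ := ih T'
      (fun a ha b hb hab => hS a (Finset.mem_of_mem_erase (hT'sub ha))
        b (Finset.mem_of_mem_erase (hT'sub hb)) hab)
      (le_of_lt hT'card)
    have huT : u ∉ T := fun h => Finset.ne_of_mem_erase (hT'sub (hTsub h)) rfl
    refine ⟨insert u T, ?_, Function.update c u cu, ?_, ?_, ?_⟩
    · exact Finset.insert_subset huS
        (hTsub.trans (hT'sub.trans (Finset.erase_subset _ _)))
    · rw [Finset.card_insert_of_notMem huT]; omega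
    · intro v hv
      rcases Finset.mem_insert.mp hv with rfl | hv
      · rw [Function.update_self]; exact hcuD
      · rw [Function.update_of_ne (fun h => huT (by rwa [h] at hv))]; exact hcD v hv
    · intro a ha w hw haw
      rcases Finset.mem_insert.mp ha with rfl | ha
      · rcases Finset.mem_insert.mp hw with rfl | hw
        · exact absurd haw (lt_irrefl _)
        · rw [Function.update_self]; exact hT' w (hTsub hw)
      · rcases Finset.mem_insert.mp hw with rfl | hw
        · exact absurd haw (not_lt.mpr (S.min'_le a (Finset.mem_of_mem_erase (hT'sub (hTsub ha)))))
        · rw [Function.update_of_ne (fun h => huT (by rwa [h] at ha))]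
          exact hpairs a ha w hw haw

end Pigeon

section Sizes

def M'req (ω K : ℕ) : ℕ := ω * (K + ω - 1) + 2
def W4req (ω K : ℕ) : ℕ := Gfun ω (M'req ω K)
def W3req (p ω K : ℕ) : ℕ := p * W4req ω K + 2
def W2req (p ω K : ℕ) : ℕ := ω * W3req p ω K + 2
def W1req (p ω K : ℕ) : ℕ := ω * W2req p ω K + 2
def Ureq (p ω K : ℕ) : ℕ := ω * W1req p ω K + 2
def bigN (p ω K : ℕ) : ℕ := K + Ureq p ω K

end Sizes

lemma abstract_cycle {Γ : Type*} [AddCommGroup Γ] {p ω : ℕ} (hω : 0 < ω)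
    (htor : ({g : Γ | g + g = 0}).encard ≤ (p : ℕ∞))
    {A : Set Γ} (hA : (Aᶜ : Set Γ).encard ≤ (ω : ℕ∞))
    {K t : ℕ} (hK : 3 ≤ K) (ht : bigN p ω K ≤ t)
    (lam : Fin t → Fin t → Γ)
    (hsymm : ∀ i j, lam i j = lam j i)
    (hlam : ∀ i j : Fin t, i ≠ j → lam i j ∈ A) :
    ∃ l : List (Fin t), l.Nodup ∧ K ≤ l.length ∧ cycVal lam l ∈ A := by
  classical
  by_contra hcon
  push_neg at hcon
  have H : ∀ l : List (Fin t), l.Nodup → K ≤ l.length → cycVal lam l ∈ Aᶜ :=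
    fun l h1 h2 => hcon l h1 h2
  have hKt : K - 1 ≤ t := by
    have : K ≤ bigN p ω K := Nat.le_add_right _ _
    omega
  -- the base path
  set xs : List (Fin t) := (List.finRange (K - 1)).map (Fin.castLE hKt) with hxs_def
  have hxs_nodup : xs.Nodup := (List.nodup_finRange _).map (Fin.castLE_injective hKt)
  have hxs_len : xs.length = K - 1 := by simp [hxs_def]
  have hxs_ne : xs ≠ [] := by
    intro h; rw [h] at hxs_len; simp at hxs_len; omega
  have hxs_mem : ∀ v ∈ xs, (v : Fin t).val < K - 1 := by
    intro v hv
    rw [hxs_def, List.mem_map] at hv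
    obtain ⟨i, _, rfl⟩ := hv
    exact i.isLt
  set x0 : Fin t := xs.head hxs_ne with hx0
  set xl : Fin t := xs.getLast hxs_ne with hxl
  have hx0m : x0 ∈ xs := List.head_mem hxs_ne
  have hxlm : xl ∈ xs := List.getLast_mem hxs_ne
  set U : Finset (Fin t) := Finset.univ.filter (fun v => K - 1 ≤ v.val) with hU
  have hUxs : ∀ u ∈ U, u ∉ xs := by
    intro u hu hmem
    have h1 := hxs_mem u hmem
    have h2 : K - 1 ≤ u.val := (Finset.mem_filter.mp hu).2
    omega
  have hUcard : Ureq p ω K ≤ U.card := by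
    have himg : U.image Fin.val = Finset.Ico (K - 1) t := by
      ext a
      simp only [Finset.mem_image, Finset.mem_Ico, hU, Finset.mem_filter, Finset.mem_univ,
        true_and]
      constructor
      · rintro ⟨v, hv, rfl⟩; exact ⟨hv, v.isLt⟩
      · rintro ⟨h1, h2⟩; exact ⟨⟨a, h2⟩, h1, rfl⟩
    have hcardeq : U.card = t - (K - 1) := by
      rw [← Finset.card_image_of_injective U Fin.val_injective, himg, Nat.card_Ico]
    rw [hcardeq]
    have := ht
    simp only [bigN] at this
    omega
  set q : Γ := pathVal lam xs with hq
  -- single-vertex cycles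
  have hC1 : ∀ u ∈ U, q + lam xl u + lam u x0 ∈ Aᶜ := by
    intro u hu
    have hnd : (xs ++ [u]).Nodup := by
      rw [List.nodup_append]
      refine ⟨hxs_nodup, List.nodup_singleton u, ?_⟩
      intro a ha b hb
      rw [List.mem_singleton] at hb
      subst hb
      rintro rfl; exact hUxs _ hu ha
    have hlen : K ≤ (xs ++ [u]).length := by
      rw [List.length_append, hxs_len]; simp; omega
    have := H _ hnd hlen
    rwa [cycVal_append_one lam xs hxs_ne u] at this
  -- two-vertex cycles
  have hC2 : ∀ u ∈ U, ∀ w ∈ U, u ≠ w → q + lam xl u + lam u w + lam w x0 ∈ Aᶜ := by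
    intro u hu w hw huw
    have hnd : (xs ++ [u, w]).Nodup := by
      rw [List.nodup_append]
      refine ⟨hxs_nodup, by simp [huw], ?_⟩
      intro a ha b hb
      rcases List.mem_pair.mp hb with rfl | rfl
      · rintro rfl; exact hUxs _ hu ha
      · rintro rfl; exact hUxs _ hw ha
    have hlen : K ≤ (xs ++ [u, w]).length := by
      rw [List.length_append, hxs_len]; simp; omega
    have := H _ hnd hlen
    rwa [cycVal_append_two lam xs hxs_ne u w] at this
  -- Step 1
  obtain ⟨s1, hs1B, W1, hW1U, hW1card, hW1⟩ :=
    pigeon (n := W1req p ω K) hA (fun u hu => hC1 u hu)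
      (by have := hUcard; simp only [Ureq] at this; omega)
  have hW1pos : 0 < W1.card := by
    have : 2 ≤ W1req p ω K := by simp [W1req]
    omega
  -- Step 2
  set u0 : Fin t := W1.min' (Finset.card_pos.mp hW1pos) with hu0def
  have hu0W1 : u0 ∈ W1 := W1.min'_mem _
  have hu0U : u0 ∈ U := hW1U hu0W1
  have herase2 : ω * W2req p ω K < (W1.erase u0).card := by
    rw [Finset.card_erase_of_mem hu0W1]
    have : W1req p ω K = ω * W2req p ω K + 2 := rfl
    omega
  obtain ⟨s2, hs2B, W2, hW2sub, hW2card, hW2⟩ :=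
    pigeon (n := W2req p ω K) (f := fun w => q + lam xl u0 + lam u0 w + lam w x0) hA
      (fun w hw => hC2 u0 hu0U w (hW1U (Finset.mem_of_mem_erase hw))
        (fun h => Finset.ne_of_mem_erase hw h.symm)) herase2
  have hW2U : ∀ w ∈ W2, w ∈ U := fun w hw => hW1U (Finset.mem_of_mem_erase (hW2sub hw))
  have hW2ne : ∀ w ∈ W2, w ≠ u0 := fun w hw => Finset.ne_of_mem_erase (hW2sub hw)
  -- Step 3
  have hcard3 : ω * W3req p ω K < W2.card := by
    have : W2req p ω K = ω * W3req p ω K + 2 := rfl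
    omega
  obtain ⟨s3, hs3B, W3, hW3sub, hW3card, hW3⟩ :=
    pigeon (n := W3req p ω K) (f := fun w => q + lam xl w + lam w u0 + lam u0 x0) hA
      (fun w hw => hC2 w (hW2U w hw) u0 hu0U (hW2ne w hw)) hcard3
  have hW3U : ∀ w ∈ W3, w ∈ U := fun w hw => hW2U w (hW3sub hw)
  have hW3ne : ∀ w ∈ W3, w ≠ u0 := fun w hw => hW2ne w (hW3sub hw)
  have hW3W1 : ∀ w ∈ W3, w ∈ W1 := fun w hw =>
    Finset.mem_of_mem_erase (hW2sub (hW3sub hw))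
  have hW3pos : 0 < W3.card := by
    have : 2 ≤ W3req p ω K := by simp [W3req]
    omega
  -- Step 4 : torsion pigeonhole
  have hkey : ∀ w ∈ W3, lam u0 w + lam u0 w
      = s2 + s3 - s1 - q - lam xl u0 - lam u0 x0 := by
    intro w hw
    have h2 := hW2 w (hW3sub hw)
    have h3 := hW3 w hw
    have h1 := hW1 w (hW3W1 w hw)
    rw [← h1, ← h2, ← h3, hsymm w u0]
    abel
  set wb : Fin t := W3.min' (Finset.card_pos.mp hW3pos) with hwbdef
  have hwbW3 : wb ∈ W3 := W3.min'_mem _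
  have htorf : ∀ w ∈ W3, (lam u0 w - lam u0 wb) ∈ {g : Γ | g + g = 0} := by
    intro w hw
    have h1 := hkey w hw
    have h2 := hkey wb hwbW3
    simp only [Set.mem_setOf_eq]
    rw [sub_add_sub_comm, h1, h2]
    abel
  have hcard4 : p * W4req ω K < W3.card := by
    have : W3req p ω K = p * W4req ω K + 2 := rfl
    omega
  obtain ⟨tc, _, W4, hW4sub, hW4card, hW4⟩ :=
    pigeon (n := W4req ω K) (f := fun w => lam u0 w - lam u0 wb) htor htorf hcard4
  set dst : Γ := tc + lam u0 wb with hdst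
  have hδ : ∀ w ∈ W4, lam u0 w = dst := by
    intro w hw
    have := hW4 w hw
    rw [hdst, ← this]
    abel
  have hW4U : ∀ w ∈ W4, w ∈ U := fun w hw => hW3U w (hW4sub hw)
  set a : Γ := s3 - q - dst - lam u0 x0 with ha
  set bb : Γ := s2 - q - lam xl u0 - dst with hbb
  have hαa : ∀ w ∈ W4, lam xl w = a := by
    intro w hw
    have h3 := hW3 w (hW4sub hw)
    rw [hsymm w u0, hδ w hw] at h3
    rw [ha, ← h3]
    abel
  have hβb : ∀ w ∈ W4, lam w x0 = bb := by
    intro w hw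
    have h2 := hW2 w (hW3sub (hW4sub hw))
    rw [hδ w hw] at h2
    rw [hbb, ← h2]
    abel
  set D : Set Γ := {g : Γ | q + a + g + bb ∈ Aᶜ} with hD
  have hDcard : D.encard ≤ (ω : ℕ∞) := by
    have himg : D = (fun x => x + -(q + a + bb)) '' Aᶜ := by
      ext g
      simp only [hD, Set.mem_setOf_eq, Set.mem_image]
      constructor
      · intro hg
        exact ⟨q + a + g + bb, hg, by abel⟩
      · rintro ⟨x, hx, rfl⟩
        have : q + a + (x + -(q + a + bb)) + bb = x := by abel
        rwa [this]
    rw [himg, (add_left_injective (-(q + a + bb))).encard_image]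
    exact hA
  have hW4pairs : ∀ u ∈ W4, ∀ w ∈ W4, u ≠ w → lam u w ∈ D := by
    intro u hu w hw huw
    have := hC2 u (hW4U u hu) w (hW4U w hw) huw
    rw [hαa u hu, hβb w hw] at this
    exact this
  -- greedy monochromatic clique
  obtain ⟨T, hTW4, c, hTcard, hcD, hTpairs⟩ :=
    greedy lam D ω hDcard (M'req ω K) W4 hW4pairs (le_of_lt hW4card)
  have hcard5 : ω * (K + ω - 1) < T.card := by
    have : M'req ω K = ω * (K + ω - 1) + 2 := rfl
    omega
  obtain ⟨μ, hμD, T'', hT''T, hT''card, hT''c⟩ :=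
    pigeon (n := K + ω - 1) (f := c) hDcard hcD hcard5
  have hT''W4 : ∀ u ∈ T'', u ∈ W4 := fun u hu => hTW4 (hT''T hu)
  have hmono : ∀ u ∈ T'', ∀ w ∈ T'', u ≠ w → lam u w = μ := by
    intro u hu w hw huw
    rcases lt_or_gt_of_ne huw with h | h
    · rw [hTpairs u (hT''T hu) w (hT''T hw) h, hT''c u hu]
    · rw [hsymm u w, hTpairs w (hT''T hw) u (hT''T hu) h, hT''c w hw]
  have hT''2 : 1 < T''.card := by omega
  have hμA : μ ∈ A := by
    obtain ⟨u, hu, w, hw, huw⟩ := Finset.one_lt_card.mp hT''2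
    rw [← hmono u hu w hw huw]
    exact hlam u w huw
  -- find a good length m
  have hfinal : ∃ m, K ≤ m ∧ m ≤ K + ω ∧ (m • μ) ∈ A := by
    by_contra hall
    push_neg at hall
    set g : Fin (ω + 1) → Γ := fun j => (K + j.val) • μ with hg
    have hginj : ¬ Function.Injective g := by
      intro hinj
      have h1 : (Finset.univ.image g).card = ω + 1 := by
        rw [Finset.card_image_of_injective _ hinj, Finset.card_univ, Fintype.card_fin]
      have h2 : ((Finset.univ.image g : Finset Γ) : Set Γ) ⊆ Aᶜ := by
        intro x hx
        simp only [Finset.coe_image, Set.mem_image, Finset.mem_coe, Finset.mem_univ,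
          Finset.coe_univ, Set.image_univ, Set.mem_range] at hx
        obtain ⟨j, rfl⟩ := hx
        exact hall _ (Nat.le_add_right _ _) (by omega)
      have h3 := (Set.encard_mono h2).trans hA
      rw [Set.encard_coe_eq_coe_finsetCard, h1, Nat.cast_le] at h3
      omega
    obtain ⟨i, j, hij, hne⟩ := Function.not_injective_iff.mp hginj
    -- wlog i < j
    have hmain : ∀ i j : Fin (ω + 1), i.val < j.val → g i = g j → False := by
      intro i j hlt hij
      set r : ℕ := j.val - i.val with hr
      have hr0 : 0 < r := by omega
      have hrω : r ≤ ω := by have := j.isLt; omega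
      have hrμ : r • μ = 0 := by
        have heq : (K + j.val) = (K + i.val) + r := by omega
        have hij' : (K + i.val) • μ + r • μ = (K + i.val) • μ := by
          rw [← add_nsmul, ← heq]
          exact hij.symm
        exact add_eq_left.mp hij'
      set m : ℕ := K + ((1 + r - K % r) % r) with hm
      have hmK : K ≤ m := Nat.le_add_right _ _
      have hmub : m ≤ K + ω := by
        have := Nat.mod_lt (1 + r - K % r) hr0
        omega
      have hmod : m % r = 1 % r := by
        have hKr : K % r < r := Nat.mod_lt _ hr0
        have h3 : K + (1 + r - K % r) = r * (K / r) + (1 + r) := by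
          have := Nat.mod_add_div K r
          omega
        have hcc : ((1 + r - K % r) % r) % r = (1 + r - K % r) % r :=
          Nat.mod_eq_of_lt (Nat.mod_lt _ hr0)
        have h4 : m % r = (K + (1 + r - K % r)) % r := by
          rw [hm, Nat.add_mod K ((1 + r - K % r) % r), hcc, ← Nat.add_mod]
        rw [h4, h3, Nat.mul_add_mod, Nat.add_comm 1 r, Nat.add_mod_left]
      have hmμ : m • μ = μ := by
        rw [nsmul_mod μ r m hrμ, hmod, ← nsmul_mod μ r 1 hrμ, one_nsmul]
      exact hall m hmK hmub (by rw [hmμ]; exact hμA)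
    rcases Nat.lt_trichotomy i.val j.val with h | h | h
    · exact hmain i j h hij
    · exact hne (Fin.ext h)
    · exact hmain j i h hij.symm
  obtain ⟨m, hmK, hmub, hmA⟩ := hfinal
  -- build the final cycle from T''
  set ls : List (Fin t) := T''.sort (· ≤ ·) with hls
  set l : List (Fin t) := ls.take m with hl
  have hls_nd : ls.Nodup := T''.sort_nodup _
  have hls_len : ls.length = T''.card := T''.length_sort _
  have hl_nd : l.Nodup := hls_nd.sublist (List.take_sublist _ _)
  have hl_len : l.length = m := by
    rw [hl, List.length_take]
    omega
  have hl_mem : ∀ v ∈ l, v ∈ T'' := fun v hv =>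
    (Finset.mem_sort _).mp ((List.take_sublist _ _).subset hv)
  have hl_ne3 : 3 ≤ l.length := by omega
  have hlne : l ≠ [] := List.ne_nil_of_length_pos (by omega)
  have htake : l.take 1 = [l.head hlne] := take_one_eq_head l hlne
  have hpw : l.Pairwise (fun u w => lam u w = μ) :=
    (List.Pairwise.and_mem.mp hl_nd).imp
      (fun hx => hmono _ (hl_mem _ hx.1) _ (hl_mem _ hx.2.1) hx.2.2)
  have hchain : List.Chain' (fun u w => lam u w = μ) (l ++ l.take 1) := by
    rw [htake, List.Chain', List.isChain_append]
    refine ⟨hpw.isChain, List.isChain_singleton _, ?_⟩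
    intro x hx y hy
    rw [List.getLast?_eq_getLast hlne, Option.mem_some_iff] at hx
    simp only [List.head?_cons, Option.mem_some_iff] at hy
    subst hx; subst hy
    exact hmono _ (hl_mem _ (List.getLast_mem hlne)) _ (hl_mem _ (List.head_mem hlne))
      (getLast_ne_head l hlne hl_nd (by omega))
  have hcv : cycVal lam l = m • μ := by
    rw [cycVal, pathVal_of_chain lam μ _ hchain, List.length_append, htake]
    simp [hl_len]
  have hfin := H l hl_nd (by omega)
  rw [Set.mem_compl_iff, hcv] at hfin
  exact hfin hmA


section Glue

variable {V : Type u} {Γ : Type v} [AddCommGroup Γ]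
variable {G : SimpleGraph V} {t : ℕ} {b : Fin t → V}

def seg (P : ∀ i j : Fin t, G.Walk (b i) (b j)) (a c : Fin t) : G.Walk (b a) (b c) :=
  if a < c then P a c else (P c a).reverse

def chainWalk (P : ∀ i j : Fin t, G.Walk (b i) (b j)) :
    (x : Fin t) → (l : List (Fin t)) → (c : Fin t) → G.Walk (b x) (b c)
  | x, [], c => seg P x c
  | x, y :: l, c => (seg P x y).append (chainWalk P y l c)

def pairsL {α : Type*} (J : List α) : List (α × α) := J.zip J.tail

lemma pairsL_cons_cons {α : Type*} (x y : α) (l : List α) :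
    pairsL (x :: y :: l) = (x, y) :: pairsL (y :: l) := rfl

lemma mem_pairsL {α : Type*} :
    ∀ (J : List α) (pq : α × α), pq ∈ pairsL J → pq.1 ∈ J.dropLast ∧ pq.2 ∈ J.tail
  | [], pq, h => by simp [pairsL] at h
  | [a], pq, h => by simp [pairsL] at h
  | a :: c :: l, pq, h => by
    rw [pairsL_cons_cons, List.mem_cons] at h
    rcases h with rfl | h
    · constructor
      · rw [List.dropLast_cons₂]; exact List.mem_cons_self
      · exact List.mem_cons_self
    · obtain ⟨h1, h2⟩ := mem_pairsL (c :: l) pq h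
      constructor
      · rw [List.dropLast_cons₂]; exact List.mem_cons_of_mem _ h1
      · exact List.mem_cons_of_mem _ h2

lemma pairsL_ne {α : Type*} :
    ∀ (l : List α) (x c : α), (x :: l).Nodup → c ∉ l → (l = [] → c ≠ x) →
      ∀ pq ∈ pairsL (x :: l ++ [c]), pq.1 ≠ pq.2
  | [], x, c, _, _, h3, pq, hpq => by
    replace hpq : pq ∈ [(x, c)] := hpq
    rw [List.mem_singleton] at hpq
    subst hpq
    exact fun h => (h3 rfl) h.symm
  | y :: l, x, c, h1, h2, _, pq, hpq => by
    replace hpq : pq ∈ (x, y) :: pairsL (y :: l ++ [c]) := hpq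
    rw [List.mem_cons] at hpq
    rcases hpq with rfl | hpq
    · intro h
      replace h : x = y := h
      exact (List.nodup_cons.mp h1).1 (h ▸ List.mem_cons_self)
    · exact pairsL_ne l y c (List.nodup_cons.mp h1).2
        (fun h => h2 (List.mem_cons_of_mem _ h))
        (fun _ h => h2 (h ▸ List.mem_cons_self)) pq hpq

lemma pairsL_first {α : Type*} :
    ∀ (l : List α) (x c a' : α), x ∉ l → x ≠ c →
      (x, a') ∈ pairsL (x :: l ++ [c]) → a' = (l ++ [c]).head (by simp)
  | [], x, c, a', _, _, hpq => by
    replace hpq : (x, a') ∈ [(x, c)] := hpq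
    rw [List.mem_singleton, Prod.mk.injEq] at hpq
    exact hpq.2
  | y :: l, x, c, a', hx, hxc, hpq => by
    replace hpq : (x, a') ∈ (x, y) :: pairsL (y :: l ++ [c]) := hpq
    rw [List.mem_cons] at hpq
    rcases hpq with h | hpq
    · rw [Prod.mk.injEq] at h
      exact h.2
    · exfalso
      have := (mem_pairsL _ _ hpq).1
      rw [show (y :: l ++ [c]) = (y :: l) ++ [c] by simp, List.dropLast_concat] at this
      exact hx this

variable {P : ∀ i j : Fin t, G.Walk (b i) (b j)}

lemma seg_isPath (hsub : IsKtSubdivision G t b P) {a c : Fin t} (hac : a ≠ c) :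
    (seg P a c).IsPath := by
  rcases lt_or_gt_of_ne hac with h | h
  · rw [seg, if_pos h]; exact hsub.2.1 a c h
  · rw [seg, if_neg (not_lt.mpr (le_of_lt h))]; exact (hsub.2.1 c a h).reverse

lemma seg_length (hlen1 : ∀ i j : Fin t, i < j → 1 ≤ (P i j).length) {a c : Fin t}
    (hac : a ≠ c) : 1 ≤ (seg P a c).length := by
  rcases lt_or_gt_of_ne hac with h | h
  · rw [seg, if_pos h]; exact hlen1 a c h
  · rw [seg, if_neg (not_lt.mpr (le_of_lt h)), SimpleGraph.Walk.length_reverse]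
    exact hlen1 c a h

lemma seg_edge_cases {a c : Fin t} (hac : a ≠ c) {e : Sym2 V}
    (he : e ∈ (seg P a c).edges) : ∃ i j : Fin t, i < j ∧ e ∈ (P i j).edges := by
  rcases lt_or_gt_of_ne hac with h | h
  · rw [seg, if_pos h] at he; exact ⟨a, c, h, he⟩
  · rw [seg, if_neg (not_lt.mpr (le_of_lt h)), SimpleGraph.Walk.edges_reverse,
      List.mem_reverse] at he
    exact ⟨c, a, h, he⟩

lemma seg_support_inter (hsub : IsKtSubdivision G t b P) {a c a' c' : Fin t}
    (hac : a ≠ c) (hac' : a' ≠ c') (h1 : ¬(a = a' ∧ c = c')) (h2 : ¬(a = c' ∧ c = a'))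
    {v : V} (hv : v ∈ (seg P a c).support) (hv' : v ∈ (seg P a' c').support) :
    (v = b a ∨ v = b c) ∧ (v = b a' ∨ v = b c') := by
  have cond4 := hsub.2.2.2
  rcases lt_or_gt_of_ne hac with h | h <;> rcases lt_or_gt_of_ne hac' with h' | h'
  · rw [seg, if_pos h] at hv
    rw [seg, if_pos h'] at hv'
    exact cond4 a c a' c' h h'
      (fun he => h1 (by rw [Prod.mk.injEq] at he; exact he)) v hv hv'
  · rw [seg, if_pos h] at hv
    rw [seg, if_neg (not_lt.mpr (le_of_lt h')), SimpleGraph.Walk.support_reverse,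
      List.mem_reverse] at hv'
    have := cond4 a c c' a' h h'
      (fun he => h2 (by rw [Prod.mk.injEq] at he; exact he)) v hv hv'
    exact ⟨this.1, this.2.symm⟩
  · rw [seg, if_neg (not_lt.mpr (le_of_lt h)), SimpleGraph.Walk.support_reverse,
      List.mem_reverse] at hv
    rw [seg, if_pos h'] at hv'
    have := cond4 c a a' c' h h'
      (fun he => h2 (by rw [Prod.mk.injEq] at he; exact ⟨he.2, he.1⟩)) v hv hv'
    exact ⟨this.1.symm, this.2⟩
  · rw [seg, if_neg (not_lt.mpr (le_of_lt h)), SimpleGraph.Walk.support_reverse,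
      List.mem_reverse] at hv
    rw [seg, if_neg (not_lt.mpr (le_of_lt h')), SimpleGraph.Walk.support_reverse,
      List.mem_reverse] at hv'
    have := cond4 c a c' a' h h'
      (fun he => h1 (by rw [Prod.mk.injEq] at he; exact ⟨he.2, he.1⟩)) v hv hv'
    exact ⟨this.1.symm, this.2.symm⟩

lemma seg_edge_disjoint (hsub : IsKtSubdivision G t b P) {a c a' c' : Fin t}
    (hac : a ≠ c) (hac' : a' ≠ c') (h1 : ¬(a = a' ∧ c = c')) (h2 : ¬(a = c' ∧ c = a'))
    {e : Sym2 V} (he : e ∈ (seg P a c).edges) (he' : e ∈ (seg P a' c').edges) :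
    False := by
  have hbinj := hsub.1
  induction e with
  | _ u w =>
    have hadj : G.Adj u w := (seg P a c).edges_subset_edgeSet he
    have huw : u ≠ w := hadj.ne
    have hu := seg_support_inter hsub hac hac' h1 h2
      ((seg P a c).fst_mem_support_of_mem_edges he)
      ((seg P a' c').fst_mem_support_of_mem_edges he')
    have hw := seg_support_inter hsub hac hac' h1 h2
      ((seg P a c).snd_mem_support_of_mem_edges he)
      ((seg P a' c').snd_mem_support_of_mem_edges he')
    rcases hu.1 with hu1 | hu1 <;> rcases hw.1 with hw1 | hw1
    · exact huw (hu1.trans hw1.symm)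
    · -- u = b a, w = b c
      rcases hu.2 with hu2 | hu2 <;> rcases hw.2 with hw2 | hw2
      · exact hac (hbinj ((hu1 ▸ hu2 : b a = b a').trans (hw1 ▸ hw2 : b c = b a').symm))
      · exact h1 ⟨hbinj (hu1 ▸ hu2 : b a = b a'), hbinj (hw1 ▸ hw2 : b c = b c')⟩
      · exact h2 ⟨hbinj (hu1 ▸ hu2 : b a = b c'), hbinj (hw1 ▸ hw2 : b c = b a')⟩
      · exact hac (hbinj ((hu1 ▸ hu2 : b a = b c').trans (hw1 ▸ hw2 : b c = b c').symm))
    · -- u = b c, w = b a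
      rcases hu.2 with hu2 | hu2 <;> rcases hw.2 with hw2 | hw2
      · exact hac (hbinj ((hw1 ▸ hw2 : b a = b a').trans (hu1 ▸ hu2 : b c = b a').symm))
      · exact h2 ⟨hbinj (hw1 ▸ hw2 : b a = b c'), hbinj (hu1 ▸ hu2 : b c = b a')⟩
      · exact h1 ⟨hbinj (hw1 ▸ hw2 : b a = b a'), hbinj (hu1 ▸ hu2 : b c = b c')⟩
      · exact hac (hbinj ((hw1 ▸ hw2 : b a = b c').trans (hu1 ▸ hu2 : b c = b c').symm))
    · exact huw (hu1.trans hw1.symm)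

lemma walkVal_append (γ : Sym2 V → Γ) {x y z : V} (p : G.Walk x y) (q : G.Walk y z) :
    walkVal γ (p.append q) = walkVal γ p + walkVal γ q := by
  simp [walkVal, SimpleGraph.Walk.edges_append]

lemma walkVal_reverse (γ : Sym2 V → Γ) {x y : V} (p : G.Walk x y) :
    walkVal γ p.reverse = walkVal γ p := by
  simp [walkVal, SimpleGraph.Walk.edges_reverse, List.sum_reverse]

lemma chainWalk_support :
    ∀ (x : Fin t) (l : List (Fin t)) (c : Fin t) (v : V),
      v ∈ (chainWalk P x l c).support →
      ∃ pq ∈ pairsL (x :: l ++ [c]), v ∈ (seg P pq.1 pq.2).support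
  | x, [], c, v, hv => ⟨(x, c), List.mem_singleton.mpr rfl, hv⟩
  | x, y :: l, c, v, hv => by
    rw [chainWalk, SimpleGraph.Walk.mem_support_append_iff] at hv
    rcases hv with hv | hv
    · exact ⟨(x, y), List.mem_cons_self, hv⟩
    · obtain ⟨pq, hpq, hvv⟩ := chainWalk_support y l c v hv
      exact ⟨pq, List.mem_cons_of_mem _ hpq, hvv⟩

lemma chainWalk_edges :
    ∀ (x : Fin t) (l : List (Fin t)) (c : Fin t) (e : Sym2 V),
      e ∈ (chainWalk P x l c).edges →
      ∃ pq ∈ pairsL (x :: l ++ [c]), e ∈ (seg P pq.1 pq.2).edges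
  | x, [], c, e, he => ⟨(x, c), List.mem_singleton.mpr rfl, he⟩
  | x, y :: l, c, e, he => by
    rw [chainWalk, SimpleGraph.Walk.edges_append, List.mem_append] at he
    rcases he with he | he
    · exact ⟨(x, y), List.mem_cons_self, he⟩
    · obtain ⟨pq, hpq, hee⟩ := chainWalk_edges y l c e he
      exact ⟨pq, List.mem_cons_of_mem _ hpq, hee⟩

lemma chainWalk_val (γ : Sym2 V → Γ) :
    ∀ (x : Fin t) (l : List (Fin t)) (c : Fin t),
      walkVal γ (chainWalk P x l c) =
        pathVal (fun i j => walkVal γ (seg P i j)) (x :: l ++ [c])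
  | x, [], c => by simp [chainWalk, pathVal]
  | x, y :: l, c => by
    rw [chainWalk, walkVal_append, chainWalk_val γ y l c]
    rfl

lemma chainWalk_length (hlen1 : ∀ i j : Fin t, i < j → 1 ≤ (P i j).length) :
    ∀ (x : Fin t) (l : List (Fin t)) (c : Fin t), (x :: l).Nodup → c ∉ l →
      (l = [] → c ≠ x) → l.length + 1 ≤ (chainWalk P x l c).length
  | x, [], c, _, _, h3 => by
    simpa [chainWalk] using seg_length hlen1 (fun h => (h3 rfl) h.symm)
  | x, y :: l, c, h1, h2, _ => by
    rw [chainWalk, SimpleGraph.Walk.length_append]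
    have hxy : x ≠ y := fun h =>
      (List.nodup_cons.mp h1).1 (h ▸ List.mem_cons_self)
    have ih := chainWalk_length hlen1 y l c (List.nodup_cons.mp h1).2
      (fun h => h2 (List.mem_cons_of_mem _ h))
      (fun _ h => h2 (h ▸ List.mem_cons_self))
    have hs := seg_length hlen1 hxy
    simp only [List.length_cons]
    omega

lemma nodup_unpack {α : Type*} {x c : α} {l : List α} (h : (x :: l ++ [c]).Nodup) :
    (x :: l).Nodup ∧ c ∉ l ∧ c ≠ x ∧ x ∉ l := by
  rw [show x :: l ++ [c] = (x :: l) ++ [c] by simp, List.nodup_append] at h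
  obtain ⟨h1, _, h3⟩ := h
  have hx : x ∉ l := (List.nodup_cons.mp h1).1
  constructor
  · exact h1
  refine ⟨?_, ?_, hx⟩
  · intro hc
    exact h3 _ (List.mem_cons_of_mem _ hc) _ (List.mem_singleton.mpr rfl) rfl
  · intro hc
    exact h3 _ (List.mem_cons_self) _ (List.mem_singleton.mpr rfl) hc.symm

lemma chainWalk_isPath (hsub : IsKtSubdivision G t b P) :
    ∀ (x : Fin t) (l : List (Fin t)) (c : Fin t), (x :: l ++ [c]).Nodup →
      (chainWalk P x l c).IsPath
  | x, [], c, h => by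
    have := (nodup_unpack h).2.2.1
    exact seg_isPath hsub (fun hh => this hh.symm)
  | x, y :: l, c, h => by
    have hJ' : (y :: l ++ [c]).Nodup := (List.nodup_cons.mp h).2
    have hxJ' : x ∉ (y :: l ++ [c]) := (List.nodup_cons.mp h).1
    have hq := chainWalk_isPath hsub y l c hJ'
    have hxy : x ≠ y := fun hh => hxJ' (hh ▸ List.mem_cons_self)
    have hp := seg_isPath hsub hxy
    have hup := nodup_unpack hJ'
    rw [chainWalk, SimpleGraph.Walk.isPath_def _, SimpleGraph.Walk.support_append,
      List.nodup_append]
    refine ⟨(SimpleGraph.Walk.isPath_def _).mp hp,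
      ((SimpleGraph.Walk.isPath_def _).mp hq).sublist (List.tail_sublist _), ?_⟩
    intro v hvp w hvq' hvw
    subst hvw
    have hvq : v ∈ (chainWalk P y l c).support := (List.tail_sublist _).subset hvq'
    obtain ⟨pq, hpq, hvseg⟩ := chainWalk_support y l c v hvq
    obtain ⟨hm1, hm2⟩ := mem_pairsL _ _ hpq
    have hm1' : pq.1 ∈ (y :: l ++ [c]) := List.dropLast_sublist _ |>.subset hm1
    have hm2' : pq.2 ∈ (y :: l ++ [c]) := List.tail_sublist _ |>.subset hm2
    have hxne1 : x ≠ pq.1 := fun hh => hxJ' (hh ▸ hm1')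
    have hxne2 : x ≠ pq.2 := fun hh => hxJ' (hh ▸ hm2')
    have hne12 : pq.1 ≠ pq.2 := pairsL_ne l y c hup.1 hup.2.1
      (fun _ => hup.2.2.1) pq hpq
    have hint := seg_support_inter hsub hxy hne12
      (fun hh => hxne1 hh.1) (fun hh => hxne2 hh.1) hvp hvseg
    rcases hint.1 with rfl | rfl
    · rcases hint.2 with hh | hh
      · exact hxne1 (hsub.1 hh)
      · exact hxne2 (hsub.1 hh)
    · have hyhead : (chainWalk P y l c).support = b y :: (chainWalk P y l c).support.tail :=
        SimpleGraph.Walk.support_eq_cons _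
      have hnd := (SimpleGraph.Walk.isPath_def _).mp hq
      rw [hyhead, List.nodup_cons] at hnd
      exact hnd.1 hvq'

lemma chainWalk_isCycle (hsub : IsKtSubdivision G t b P)
    (x y : Fin t) (l : List (Fin t)) (hlne : l ≠ []) (hnd : (x :: y :: l).Nodup) :
    (chainWalk P x (y :: l) x).IsCycle := by
  have hbinj := hsub.1
  have hxyl : x ∉ y :: l := (List.nodup_cons.mp hnd).1
  have hyl : (y :: l).Nodup := (List.nodup_cons.mp hnd).2
  have hxy : x ≠ y := fun hh => hxyl (hh ▸ List.mem_cons_self)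
  have hxl : x ∉ l := fun hh => hxyl (List.mem_cons_of_mem _ hh)
  have hyll : y ∉ l := (List.nodup_cons.mp hyl).1
  have hJ'nd : (y :: l ++ [x]).Nodup := by
    rw [show y :: l ++ [x] = (y :: l) ++ [x] by simp, List.nodup_append]
    refine ⟨hyl, List.nodup_singleton _, ?_⟩
    intro a ha b hb
    rw [List.mem_singleton] at hb
    subst hb
    rintro rfl; exact hxyl ha
  have hq := chainWalk_isPath hsub y l x hJ'nd
  have hp := seg_isPath hsub hxy
  -- key pair facts
  have hkey : ∀ pq ∈ pairsL (y :: l ++ [x]),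
      pq.1 ≠ pq.2 ∧ ¬(x = pq.1 ∧ y = pq.2) ∧ ¬(x = pq.2 ∧ y = pq.1) := by
    intro pq hpq
    obtain ⟨hm1, hm2⟩ := mem_pairsL _ _ hpq
    rw [show y :: l ++ [x] = (y :: l) ++ [x] by simp, List.dropLast_concat] at hm1
    have hne12 : pq.1 ≠ pq.2 := pairsL_ne l y x hyl hxl (fun _ => hxy) pq hpq
    refine ⟨hne12, ?_, ?_⟩
    · rintro ⟨hh1, _⟩
      exact hxyl (hh1 ▸ hm1)
    · rintro ⟨hh1, hh2⟩
      -- pq = (y, x); impossible since l ≠ []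
      obtain ⟨z, l2, rfl⟩ : ∃ z l2, l = z :: l2 := by
        cases l with
        | nil => exact absurd rfl hlne
        | cons z l2 => exact ⟨z, l2, rfl⟩
      have hpq' : (y, x) ∈ pairsL (y :: (z :: l2) ++ [x]) := by
        rwa [show ((y, x) : Fin t × Fin t) = pq by rw [hh2, hh1]]
      have hthis := pairsL_first (z :: l2) y x x hyll (fun hh => hxy hh.symm) hpq'
      simp only [List.cons_append, List.head_cons] at hthis
      exact hxl (hthis ▸ List.mem_cons_self)
  rw [SimpleGraph.Walk.isCycle_def]
  refine ⟨?_, ?_, ?_⟩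
  · -- trail
    rw [SimpleGraph.Walk.isTrail_def, chainWalk, SimpleGraph.Walk.edges_append,
      List.nodup_append]
    refine ⟨hp.isTrail.edges_nodup, hq.isTrail.edges_nodup, ?_⟩
    intro e hep e' heq hee
    subst hee
    obtain ⟨pq, hpq, heseg⟩ := chainWalk_edges y l x e heq
    obtain ⟨hne12, hk1, hk2⟩ := hkey pq hpq
    exact seg_edge_disjoint hsub hxy hne12 hk1 hk2 hep heseg
  · -- not nil
    intro hnil
    have h0 : (chainWalk P x (y :: l) x).length = 0 := by rw [hnil]; rfl
    rw [chainWalk, SimpleGraph.Walk.length_append] at h0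
    have : (seg P x y).length = 0 := by omega
    exact (hbinj.ne hxy) (SimpleGraph.Walk.eq_of_length_eq_zero this)
  · -- support tail nodup
    rw [chainWalk, SimpleGraph.Walk.support_append,
      List.tail_append_of_ne_nil (SimpleGraph.Walk.support_ne_nil _), List.nodup_append]
    have hpnd := (SimpleGraph.Walk.isPath_def _).mp hp
    have hqnd := (SimpleGraph.Walk.isPath_def _).mp hq
    refine ⟨hpnd.sublist (List.tail_sublist _), hqnd.sublist (List.tail_sublist _), ?_⟩
    intro v hvp' w hvq' hvw
    subst hvw
    have hvp : v ∈ (seg P x y).support := (List.tail_sublist _).subset hvp'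
    have hvq : v ∈ (chainWalk P y l x).support := (List.tail_sublist _).subset hvq'
    obtain ⟨pq, hpq, hvseg⟩ := chainWalk_support y l x v hvq
    obtain ⟨hne12, hk1, hk2⟩ := hkey pq hpq
    have hint := seg_support_inter hsub hxy hne12 (fun hh => hk1 hh) (fun hh => hk2 hh)
      hvp hvseg
    rcases hint.1 with rfl | rfl
    · have hhead : (seg P x y).support = b x :: (seg P x y).support.tail :=
        SimpleGraph.Walk.support_eq_cons _
      rw [hhead, List.nodup_cons] at hpnd
      exact hpnd.1 hvp'
    · have hhead : (chainWalk P y l x).support = b y :: (chainWalk P y l x).support.tail :=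
        SimpleGraph.Walk.support_eq_cons _
      rw [hhead, List.nodup_cons] at hqnd
      exact hqnd.1 hvq'

end Glue

theorem statement16 (p ω : ℕ) (hp : 0 < p) (hω : 0 < ω) :
    ∃ f : ℕ → ℝ,
      ∀ (Γ : Type v) [AddCommGroup Γ],
        ({g : Γ | g + g = 0}).encard ≤ (p : ℕ∞) →
        ∀ (A : Set Γ), A.Nonempty → (Aᶜ : Set Γ).encard ≤ (ω : ℕ∞) →
        ∀ (V : Type u) [Fintype V] (G : SimpleGraph V) (γ : Sym2 V → Γ) (t k : ℕ),
          f k ≤ (t : ℝ) →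
          ∀ (b : Fin t → V) (P : ∀ i j : Fin t, G.Walk (b i) (b j)),
            IsKtSubdivision G t b P →
            (∀ i j : Fin t, i < j →
              walkVal γ (P i j) ∈ A ∧ 1 ≤ (P i j).length) →
            ∃ (v : V) (w : G.Walk v v), w.IsCycle ∧ walkVal γ w ∈ A ∧
              k ≤ w.length ∧
              ∀ e ∈ w.edges, ∃ i j : Fin t, i < j ∧ e ∈ (P i j).edges := by
  classical
  refine ⟨fun k => ((bigN p ω (max k 3) : ℕ) : ℝ), ?_⟩
  intro Γ _ htor A hAne hAc V _ G γ t k hf b P hsub hA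
  have hKt : bigN p ω (max k 3) ≤ t := by
    have hf' : ((bigN p ω (max k 3) : ℕ) : ℝ) ≤ (t : ℝ) := hf
    exact_mod_cast hf'
  have hsymm : ∀ i j : Fin t,
      walkVal γ (seg P i j) = walkVal γ (seg P j i) := by
    intro i j
    rcases lt_trichotomy i j with h | h | h
    · rw [seg, if_pos h, seg, if_neg (not_lt.mpr (le_of_lt h)), walkVal_reverse]
    · subst h; rfl
    · rw [seg, if_neg (not_lt.mpr (le_of_lt h)), seg, if_pos h, walkVal_reverse]
  have hlamA : ∀ i j : Fin t, i ≠ j → walkVal γ (seg P i j) ∈ A := by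
    intro i j hij
    rcases lt_or_gt_of_ne hij with h | h
    · rw [seg, if_pos h]; exact (hA i j h).1
    · rw [seg, if_neg (not_lt.mpr (le_of_lt h)), walkVal_reverse]
      exact (hA j i h).1
  have hlen1 : ∀ i j : Fin t, i < j → 1 ≤ (P i j).length := fun i j h => (hA i j h).2
  obtain ⟨l, hlnd, hllen, hlval⟩ := abstract_cycle hω htor hAc
    (le_max_right k 3) hKt (fun i j => walkVal γ (seg P i j)) hsymm hlamA
  have hl3 : 3 ≤ l.length := le_trans (le_max_right k 3) hllen
  obtain ⟨x, l1, rfl⟩ : ∃ x l1, l = x :: l1 := by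
    cases l with
    | nil => simp at hl3
    | cons x l1 => exact ⟨x, l1, rfl⟩
  obtain ⟨y, l', rfl⟩ : ∃ y l', l1 = y :: l' := by
    cases l1 with
    | nil => simp at hl3
    | cons y l' => exact ⟨y, l', rfl⟩
  have hl'ne : l' ≠ [] := by
    intro h
    rw [h] at hl3
    simp at hl3
  refine ⟨b x, chainWalk P x (y :: l') x, ?_, ?_, ?_, ?_⟩
  · exact chainWalk_isCycle hsub x y l' hl'ne hlnd
  · rw [chainWalk_val γ x (y :: l') x]
    exact hlval
  · have hlen := chainWalk_length hlen1 x (y :: l') x hlnd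
      (List.nodup_cons.mp hlnd).1 (fun h => absurd h (List.cons_ne_nil _ _))
    have hKl : k ≤ (x :: y :: l').length := le_trans (le_max_left k 3) hllen
    simp only [List.length_cons] at hKl hlen ⊢
    omega
  · intro e he
    obtain ⟨pq, hpq, heseg⟩ := chainWalk_edges x (y :: l') x e he
    have hne12 : pq.1 ≠ pq.2 := by
      refine pairsL_ne (y :: l') x x hlnd ?_ ?_ pq hpq
      · exact (List.nodup_cons.mp hlnd).1
      · intro h
        exact absurd h (List.cons_ne_nil _ _)
    exact seg_edge_cases hne12 heseg

end ArbPaper
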